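/- Let n ≥ 2 and let R_n be the nilCoxeter algebra over ℂ, i.e. the quotient of the free associative ℂ-algebra on generators Y_1, …, Y_{n−1} by the two-sided ideal generated by the elements Y_i² (for all i), Y_iY_j − Y_jY_i (for all i, j with |i−j| > 1), and Y_iY_{i+1}Y_i − Y_{i+1}Y_iY_{i+1} (for all i ≤ n−2). Then every simple R_n-module that is finite-dimensional over ℂ is one-dimensional, with every generator Y_i acting by zero; in particular, any two finite-dimensional simple R_n-modules are isomorphic. -/

import Mathlib

open FreeAlgebra

/-- The defining relations of the nilCoxeter algebra `R_n` on generators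
`Y_0, …, Y_{n-2}` (0-indexed): `Y_i² = 0`, `Y_iY_j = Y_jY_i` for `|i−j| > 1`, and
`Y_iY_{i+1}Y_i = Y_{i+1}Y_iY_{i+1}`. -/
inductive NilCoxeterRel (n : ℕ) :
    FreeAlgebra ℂ (Fin (n - 1)) → FreeAlgebra ℂ (Fin (n - 1)) → Prop
  | square (i : Fin (n - 1)) :
      NilCoxeterRel n (ι ℂ i * ι ℂ i) 0
  | commute (i j : Fin (n - 1)) (h : 1 < |(i : ℤ) - (j : ℤ)|) :
      NilCoxeterRel n (ι ℂ i * ι ℂ j) (ι ℂ j * ι ℂ i)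
  | braid (i j : Fin (n - 1)) (h : (j : ℕ) = (i : ℕ) + 1) :
      NilCoxeterRel n (ι ℂ i * ι ℂ j * ι ℂ i) (ι ℂ j * ι ℂ i * ι ℂ j)

/-- The nilCoxeter algebra `R_n` over `ℂ`: the quotient of the free associative
`ℂ`-algebra on `Y_1, …, Y_{n−1}` by the nilCoxeter relations. -/
abbrev NilCoxeterAlgebra (n : ℕ) : Type := RingQuot (NilCoxeterRel n)

/-- The generator `Y_i` of the nilCoxeter algebra. -/
noncomputable def Y (n : ℕ) (i : Fin (n - 1)) : NilCoxeterAlgebra n :=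
  RingQuot.mkAlgHom ℂ (NilCoxeterRel n) (ι ℂ i)

namespace NilCoxAux

variable {A : Type*} [Ring A]

/-- product of a word -/
def wP (y : ℕ → A) (l : List ℕ) : A := (l.map y).prod

lemma wP_nil (y : ℕ → A) : wP y [] = 1 := rfl

lemma wP_append (y : ℕ → A) (l₁ l₂ : List ℕ) : wP y (l₁ ++ l₂) = wP y l₁ * wP y l₂ := by
  simp [wP]

lemma wP_singleton (y : ℕ → A) (i : ℕ) : wP y [i] = y i := by simp [wP]

/-- descending run `[j+len-1, ..., j]` -/
def drun (j len : ℕ) : List ℕ := (List.range' j len).reverse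

lemma drun_zero (j : ℕ) : drun j 0 = [] := rfl

lemma drun_one (j : ℕ) : drun j 1 = [j] := rfl

lemma drun_add (j a b : ℕ) : drun j (a + b) = drun (j + a) b ++ drun j a := by
  unfold drun
  rw [← List.range'_append_1,
    List.reverse_append]

lemma mem_drun {t j len : ℕ} (h : t ∈ drun j len) : j ≤ t ∧ t < j + len := by
  simpa [drun, List.mem_reverse, List.mem_range'_1] using h

section Rels

variable (y : ℕ → A)
  (hsq : ∀ t, y t * y t = 0)
  (hcomm : ∀ s t, s + 2 ≤ t → y s * y t = y t * y s)
  (hbraid : ∀ t, y t * y (t + 1) * y t = y (t + 1) * y t * y (t + 1))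

include hcomm in
lemma comm_left (s : ℕ) (d : List ℕ) (h : ∀ t ∈ d, s + 2 ≤ t) :
    wP y d * y s = y s * wP y d := by
  induction d with
  | nil => simp [wP]
  | cons t d ih =>
    have h1 : wP y (t :: d) = y t * wP y d := by simp [wP]
    rw [h1, mul_assoc, ih (fun u hu => h u (List.mem_cons_of_mem _ hu)),
      ← mul_assoc, ← hcomm s t (h t List.mem_cons_self), mul_assoc]

include hcomm in
lemma comm_right (s : ℕ) (d : List ℕ) (h : ∀ t ∈ d, t + 2 ≤ s) :
    wP y d * y s = y s * wP y d := by
  induction d with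
  | nil => simp [wP]
  | cons t d ih =>
    have h1 : wP y (t :: d) = y t * wP y d := by simp [wP]
    rw [h1, mul_assoc, ih (fun u hu => h u (List.mem_cons_of_mem _ hu)),
      ← mul_assoc, hcomm t s (h t List.mem_cons_self), mul_assoc]

include hsq in
lemma drun_mul_self (j c : ℕ) : wP y (drun j (1 + c)) * y j = 0 := by
  rw [show (1 + c) = c + 1 from by omega]
  have : drun j (c + 1) = drun (j + 1) c ++ drun j 1 := by
    rw [show c + 1 = 1 + c from by omega, drun_add]
  rw [this, wP_append, drun_one, wP_singleton, mul_assoc, hsq, mul_zero]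

include hcomm hbraid in
lemma KL (j len i : ℕ) (hji : j < i) (hik : i < j + len) :
    wP y (drun j len) * y i = y (i - 1) * wP y (drun j len) := by
  obtain ⟨m, rfl⟩ : ∃ m, i = m + 1 := ⟨i - 1, by omega⟩
  have hm : (m + 1) - 1 = m := by omega
  rw [hm]
  set a := m - j with ha
  set c := len - a - 2 with hc
  have hsplit : drun j len = drun (m + 2) c ++ drun m 2 ++ drun j a := by
    have h1 : len = a + (2 + c) := by omega
    have h2 : j + a = m := by omega
    rw [h1, drun_add, drun_add, h2]
  have hM : wP y (drun m 2) = y (m + 1) * y m := by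
    have : drun m 2 = [m + 1, m] := by
      simp [drun, List.range'_succ]
    rw [this]; simp [wP]
  have hL : wP y (drun j a) * y (m + 1) = y (m + 1) * wP y (drun j a) :=
    comm_right y hcomm (m + 1) _ (fun t ht => by have := mem_drun ht; omega)
  have hH : wP y (drun (m + 2) c) * y m = y m * wP y (drun (m + 2) c) :=
    comm_left y hcomm m _ (fun t ht => by have := mem_drun ht; omega)
  set H := wP y (drun (m + 2) c)
  set L := wP y (drun j a)
  have hb : y (m + 1) * (y m * (y (m + 1) * L)) = y m * (y (m + 1) * (y m * L)) := by
    calc y (m + 1) * (y m * (y (m + 1) * L)) = (y (m + 1) * y m * y (m + 1)) * L := by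
          simp only [mul_assoc]
      _ = (y m * y (m + 1) * y m) * L := by rw [← hbraid m]
      _ = y m * (y (m + 1) * (y m * L)) := by simp only [mul_assoc]
  rw [hsplit, wP_append, wP_append, hM]
  calc H * (y (m + 1) * y m) * L * y (m + 1)
      = H * (y (m + 1) * (y m * (L * y (m + 1)))) := by simp only [mul_assoc]
    _ = H * (y (m + 1) * (y m * (y (m + 1) * L))) := by rw [hL]
    _ = H * (y m * (y (m + 1) * (y m * L))) := by rw [hb]
    _ = (H * y m) * (y (m + 1) * (y m * L)) := by simp only [mul_assoc]
    _ = (y m * H) * (y (m + 1) * (y m * L)) := by rw [hH]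
    _ = y m * (H * (y (m + 1) * y m) * L) := by simp only [mul_assoc]

include hsq hcomm hbraid in
lemma RW (k : ℕ) (l : List ℕ) : (∀ i ∈ l, i ≤ k) →
    wP y l = 0 ∨ ∃ a len, (∀ i ∈ a, i < k) ∧ len ≤ k + 1 ∧
      wP y l = wP y a * wP y (drun (k + 1 - len) len) ∧ a.length + len = l.length := by
  induction l using List.reverseRecOn with
  | nil =>
    intro _
    right
    exact ⟨[], 0, by simp, by omega, by simp [wP_nil, drun_zero], by simp⟩
  | append_singleton l i ih =>
    intro hmem
    have hik : i ≤ k := hmem i (by simp)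
    have hl : ∀ t ∈ l, t ≤ k := fun t ht => hmem t (by simp [ht])
    rcases ih hl with h0 | ⟨a, len, ha, hlen, heq, hlenEq⟩
    · left; rw [wP_append, h0, zero_mul]
    · have hbase : wP y (l ++ [i]) = wP y a * wP y (drun (k + 1 - len) len) * y i := by
        rw [wP_append, heq, wP_singleton]
      rcases Nat.eq_zero_or_pos len with h0 | hpos
      · subst h0
        rcases eq_or_lt_of_le hik with hik' | hik'
        · right
          refine ⟨a, 1, ha, by omega, ?_, by simp only [List.length_append, List.length_cons, List.length_nil]; omega⟩
          rw [hbase, drun_zero, wP_nil, mul_one, show k + 1 - 1 = k from by omega,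
            drun_one, wP_singleton, hik']
        · right
          refine ⟨a ++ [i], 0, ?_, by omega, ?_, by simp only [List.length_append, List.length_cons, List.length_nil]; omega⟩
          · intro t ht
            rcases List.mem_append.1 ht with h | h
            · exact ha t h
            · simp at h; omega
          · rw [hbase, drun_zero, wP_nil, mul_one, mul_one, wP_append, wP_singleton]
      · set j := k + 1 - len with hj
        have hj1 : j + len = k + 1 := by omega
        rcases lt_trichotomy i j with hij | hij | hij
        · rcases eq_or_lt_of_le (Nat.succ_le_of_lt hij) with hij' | hij'
          · -- i + 1 = j : extend the run
            right
            refine ⟨a, len + 1, ha, by omega, ?_, by simp only [List.length_append, List.length_cons, List.length_nil]; omega⟩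
            have hd : drun i (len + 1) = drun j len ++ [i] := by
              rw [show len + 1 = 1 + len from by omega, drun_add, show i + 1 = j from hij',
                drun_one]
            rw [hbase, show k + 1 - (len + 1) = i from by omega, hd, wP_append, wP_singleton,
              mul_assoc]
          · -- i + 2 ≤ j : commute through
            right
            refine ⟨a ++ [i], len, ?_, hlen, ?_, by simp only [List.length_append, List.length_cons, List.length_nil]; omega⟩
            · intro t ht
              rcases List.mem_append.1 ht with h | h
              · exact ha t h
              · simp at h; omega
            · rw [hbase, mul_assoc,
                comm_left y hcomm i _ (fun t ht => by have := mem_drun ht; omega),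
                ← mul_assoc, wP_append, wP_singleton]
        · -- i = j : zero
          left
          rw [hbase, mul_assoc, ← hij, show len = 1 + (len - 1) from by omega]
          rw [hij, drun_mul_self y hsq, mul_zero]
        · -- j < i ≤ k
          right
          refine ⟨a ++ [i - 1], len, ?_, hlen, ?_, by simp only [List.length_append, List.length_cons, List.length_nil]; omega⟩
          · intro t ht
            rcases List.mem_append.1 ht with h | h
            · exact ha t h
            · simp at h; omega
          · rw [hbase, mul_assoc, KL y hcomm hbraid j len i hij (by omega), ← mul_assoc,
              wP_append, wP_singleton]

/-- bound for vanishing of words -/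
def bnd : ℕ → ℕ
  | 0 => 2
  | (k+1) => bnd k + (k + 2)

include hsq hcomm hbraid in
lemma vanish : ∀ (k : ℕ) (l : List ℕ), (∀ i ∈ l, i ≤ k) → bnd k ≤ l.length → wP y l = 0 := by
  intro k
  induction k with
  | zero =>
    intro l hmem hlen
    rcases RW y hsq hcomm hbraid 0 l hmem with h | ⟨a, len, ha, hlen', heq, hl⟩
    · exact h
    · exfalso
      have : a = [] := List.eq_nil_iff_forall_not_mem.2 (fun t ht => by have := ha t ht; omega)
      subst this
      simp [bnd] at hlen hl
      omega
  | succ k ihk =>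
    intro l hmem hlen
    rcases RW y hsq hcomm hbraid (k + 1) l hmem with h | ⟨a, len, ha, hlen', heq, hl⟩
    · exact h
    · have hz : wP y a = 0 := by
        refine ihk a (fun t ht => by have := ha t ht; omega) ?_
        have : bnd (k + 1) = bnd k + (k + 2) := rfl
        omega
      rw [heq, hz, zero_mul]

end Rels

end NilCoxAux

namespace NilCoxAux2

lemma Y_sq (n : ℕ) (i : Fin (n - 1)) : Y n i * Y n i = 0 := by
  have := RingQuot.mkAlgHom_rel ℂ (NilCoxeterRel.square (n := n) i)
  simpa only [map_mul, map_zero, Y] using this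

lemma Y_comm (n : ℕ) (i j : Fin (n - 1)) (h : 1 < |(i : ℤ) - (j : ℤ)|) :
    Y n i * Y n j = Y n j * Y n i := by
  have := RingQuot.mkAlgHom_rel ℂ (NilCoxeterRel.commute (n := n) i j h)
  simpa only [map_mul, Y] using this

lemma Y_braid (n : ℕ) (i j : Fin (n - 1)) (h : (j : ℕ) = (i : ℕ) + 1) :
    Y n i * Y n j * Y n i = Y n j * Y n i * Y n j := by
  have := RingQuot.mkAlgHom_rel ℂ (NilCoxeterRel.braid (n := n) i j h)
  simpa only [map_mul, Y] using this

/-- the generators, extended by zero to all of `ℕ` -/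
noncomputable def yext (n : ℕ) : ℕ → NilCoxeterAlgebra n := fun t =>
  if h : t < n - 1 then Y n ⟨t, h⟩ else 0

lemma yext_sq (n : ℕ) (t : ℕ) : yext n t * yext n t = 0 := by
  unfold yext
  split
  · exact Y_sq n _
  · simp

lemma yext_comm (n : ℕ) (s t : ℕ) (h : s + 2 ≤ t) :
    yext n s * yext n t = yext n t * yext n s := by
  unfold yext
  by_cases hs : s < n - 1
  · by_cases ht : t < n - 1
    · rw [dif_pos hs, dif_pos ht]
      refine Y_comm n ⟨s, hs⟩ ⟨t, ht⟩ ?_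
      simp only [Fin.val_mk]
      rw [abs_sub_comm, abs_of_nonneg (by omega)]
      omega
    · rw [dif_neg ht]; simp
  · rw [dif_neg hs]; simp

lemma yext_braid (n : ℕ) (t : ℕ) :
    yext n t * yext n (t + 1) * yext n t = yext n (t + 1) * yext n t * yext n (t + 1) := by
  by_cases h : t + 1 < n - 1
  · have ht : t < n - 1 := by omega
    have := Y_braid n ⟨t, ht⟩ ⟨t + 1, h⟩ rfl
    simpa only [yext, dif_pos h, dif_pos ht] using this
  · simp [yext, dif_neg h]

/-- the augmentation map -/
noncomputable def aug (n : ℕ) : NilCoxeterAlgebra n →ₐ[ℂ] ℂ :=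
  RingQuot.liftAlgHom ℂ ⟨FreeAlgebra.lift ℂ (fun _ => (0 : ℂ)), by
    intro x y h
    induction h with
    | square i => simp
    | commute i j h => simp
    | braid i j h => simp⟩

lemma aug_Y (n : ℕ) (i : Fin (n - 1)) : aug n (Y n i) = 0 := by
  rw [Y, aug, RingQuot.liftAlgHom_mkAlgHom_apply]
  simp

lemma master (n : ℕ) (hn : 2 ≤ n) (M : Type) [AddCommGroup M]
    [Module (NilCoxeterAlgebra n) M] [Module ℂ M]
    [IsScalarTower ℂ (NilCoxeterAlgebra n) M]
    (hsimple : IsSimpleModule (NilCoxeterAlgebra n) M)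
    (hfd : FiniteDimensional ℂ M) :
    Module.finrank ℂ M = 1 ∧ (∀ (i : Fin (n - 1)) (m : M), Y n i • m = 0) ∧
      ∀ (r : NilCoxeterAlgebra n) (m : M), r • m = aug n r • m := by
  have csmul : ∀ (c : ℂ) (r : NilCoxeterAlgebra n) (m : M), r • (c • m) = c • (r • m) := by
    intro c r m
    rw [← algebraMap_smul (NilCoxeterAlgebra n) c m, ← mul_smul, ← Algebra.commutes c r,
      mul_smul, algebraMap_smul]
  -- word products and spans
  let Vt : ℕ → Submodule ℂ M := fun t => Submodule.span ℂ
    {m | ∃ (l : List (Fin (n - 1))) (x : M), t ≤ l.length ∧ (l.map (Y n)).prod • x = m}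
  have hY_into : ∀ (i : Fin (n - 1)) (m : M), Y n i • m ∈ Vt 1 := by
    intro i m
    exact Submodule.subset_span ⟨[i], m, by simp, by simp⟩
  have smulclo : ∀ (r : NilCoxeterAlgebra n) (m : M), m ∈ Vt 1 → r • m ∈ Vt 1 := by
    intro r
    obtain ⟨x, rfl⟩ := RingQuot.mkAlgHom_surjective ℂ (NilCoxeterRel n) r
    induction x using FreeAlgebra.induction with
    | grade0 c =>
      intro m hm
      rw [AlgHom.commutes, algebraMap_smul]
      exact Submodule.smul_mem _ c hm
    | grade1 i =>
      intro m _
      exact hY_into i m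
    | mul a b iha ihb =>
      intro m hm
      rw [map_mul, mul_smul]
      exact iha _ (ihb _ hm)
    | add a b iha ihb =>
      intro m hm
      rw [map_add, add_smul]
      exact Submodule.add_mem _ (iha m hm) (ihb m hm)
  let U : Submodule (NilCoxeterAlgebra n) M :=
    { carrier := Vt 1
      add_mem' := fun h h' => Submodule.add_mem _ h h'
      zero_mem' := Submodule.zero_mem _
      smul_mem' := fun r m hm => smulclo r m hm }
  -- vanishing of long words
  have hvanY : ∀ (l : List (Fin (n - 1))), NilCoxAux.bnd (n - 2) ≤ l.length →
      (l.map (Y n)).prod = 0 := by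
    intro l hlen
    have hrw : (l.map (Y n)).prod = NilCoxAux.wP (yext n) (l.map Fin.val) := by
      rw [NilCoxAux.wP, List.map_map]
      congr 1
      apply List.map_congr_left
      intro i _
      simp [yext, Function.comp, i.isLt]
    rw [hrw]
    refine NilCoxAux.vanish (yext n) (yext_sq n) (yext_comm n) (yext_braid n) (n - 2)
      (l.map Fin.val) (fun t ht => ?_) (by simpa using hlen)
    obtain ⟨i, _, rfl⟩ := List.mem_map.1 ht
    have := i.isLt
    omega
  have hne : ∃ m : M, m ≠ 0 := by
    by_contra hc
    push_neg at hc
    have : (⊥ : Submodule (NilCoxeterAlgebra n) M) = ⊤ := by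
      apply Submodule.eq_top_iff'.2
      intro m
      rw [hc m]
      exact Submodule.zero_mem _
    exact bot_ne_top this
  -- case analysis on U
  have hUbot : U = ⊥ := by
    rcases hsimple.eq_bot_or_eq_top U with h | h
    · exact h
    · exfalso
      have hV1 : ∀ m : M, m ∈ Vt 1 := by
        intro m
        have : m ∈ U := h ▸ Submodule.mem_top
        exact this
      have hVtop : ∀ t (m : M), m ∈ Vt t := by
        intro t
        induction t with
        | zero =>
          intro m
          exact Submodule.subset_span ⟨[], m, by simp, by simp⟩
        | succ t iht =>
          intro m
          have hm := iht m
          induction hm using Submodule.span_induction with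
          | mem p hp =>
            obtain ⟨l, x, hlen, rfl⟩ := hp
            have hx := hV1 x
            induction hx using Submodule.span_induction with
            | mem q hq =>
              obtain ⟨l', x', hlen', rfl⟩ := hq
              refine Submodule.subset_span ⟨l ++ l', x', ?_, ?_⟩
              · simp only [List.length_append]; omega
              · rw [List.map_append, List.prod_append, mul_smul]
            | zero => rw [smul_zero]; exact Submodule.zero_mem _
            | add x1 x2 h1 h2 ih1 ih2 =>
              rw [smul_add]; exact Submodule.add_mem _ ih1 ih2
            | smul c x1 hx1 ih =>
              rw [csmul]; exact Submodule.smul_mem _ c ih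
          | zero => exact Submodule.zero_mem _
          | add x1 x2 h1 h2 ih1 ih2 => exact Submodule.add_mem _ ih1 ih2
          | smul c p hp ih => exact Submodule.smul_mem _ c ih
      obtain ⟨m0, hm0⟩ := hne
      have : m0 ∈ Vt (NilCoxAux.bnd (n - 2)) := hVtop _ m0
      have hbot : Vt (NilCoxAux.bnd (n - 2)) ≤ ⊥ := by
        apply Submodule.span_le.2
        rintro m ⟨l, x, hlen, rfl⟩
        rw [hvanY l hlen, zero_smul]
        exact Submodule.zero_mem _
      exact hm0 (Submodule.mem_bot ℂ |>.1 (hbot this))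
  have hY0 : ∀ (i : Fin (n - 1)) (m : M), Y n i • m = 0 := by
    intro i m
    have h1 : Y n i • m ∈ U := hY_into i m
    rw [hUbot] at h1
    simpa using h1
  have hact : ∀ (r : NilCoxeterAlgebra n) (m : M), r • m = aug n r • m := by
    intro r
    obtain ⟨x, rfl⟩ := RingQuot.mkAlgHom_surjective ℂ (NilCoxeterRel n) r
    induction x using FreeAlgebra.induction with
    | grade0 c =>
      intro m
      rw [AlgHom.commutes, AlgHom.commutes, algebraMap_smul, Algebra.algebraMap_self_apply]
    | grade1 i =>
      intro m
      have h1 : RingQuot.mkAlgHom ℂ (NilCoxeterRel n) (ι ℂ i) = Y n i := rfl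
      rw [h1, hY0, aug_Y, zero_smul]
    | mul a b iha ihb =>
      intro m
      rw [map_mul, mul_smul, ihb, csmul, iha, map_mul, mul_comm, mul_smul]
    | add a b iha ihb =>
      intro m
      rw [map_add, add_smul, iha, ihb, map_add, add_smul]
  obtain ⟨x0, hx0⟩ := hne
  let P : Submodule (NilCoxeterAlgebra n) M :=
    { carrier := (Submodule.span ℂ {x0} : Submodule ℂ M)
      add_mem' := fun h h' => Submodule.add_mem _ h h'
      zero_mem' := Submodule.zero_mem _
      smul_mem' := fun r m hm => by
        have : r • m = aug n r • m := hact r m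
        rw [this]
        exact Submodule.smul_mem _ _ hm }
  have hP : P = ⊤ := by
    rcases hsimple.eq_bot_or_eq_top P with h | h
    · exfalso
      have : x0 ∈ P := Submodule.mem_span_singleton_self x0
      rw [h] at this
      exact hx0 (by simpa using this)
    · exact h
  have hrank : Module.finrank ℂ M = 1 := by
    refine finrank_eq_one x0 hx0 (fun w => ?_)
    have : w ∈ P := hP ▸ Submodule.mem_top
    have hw : w ∈ (Submodule.span ℂ {x0} : Submodule ℂ M) := this
    obtain ⟨c, hc⟩ := Submodule.mem_span_singleton.1 hw
    exact ⟨c, hc⟩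
  exact ⟨hrank, hY0, hact⟩

end NilCoxAux2

/-- Every simple `R_n`-module that is finite-dimensional over `ℂ` is one-dimensional,
with each generator `Y_i` acting by zero; in particular any two finite-dimensional
simple `R_n`-modules are isomorphic. -/
theorem nilCoxeter_unique_simple_module (n : ℕ) (hn : 2 ≤ n)
    (M : Type) [AddCommGroup M] [Module (NilCoxeterAlgebra n) M]
    [Module ℂ M] [IsScalarTower ℂ (NilCoxeterAlgebra n) M]
    (hsimple : IsSimpleModule (NilCoxeterAlgebra n) M)
    (hfd : FiniteDimensional ℂ M) :
    (Module.finrank ℂ M = 1 ∧ ∀ (i : Fin (n - 1)) (m : M), Y n i • m = 0) ∧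
    ∀ (N : Type) [AddCommGroup N] [Module (NilCoxeterAlgebra n) N]
      [Module ℂ N] [IsScalarTower ℂ (NilCoxeterAlgebra n) N],
      IsSimpleModule (NilCoxeterAlgebra n) N → FiniteDimensional ℂ N →
      Nonempty (M ≃ₗ[NilCoxeterAlgebra n] N) := by
  obtain ⟨h1M, h2M, h3M⟩ := NilCoxAux2.master n hn M hsimple hfd
  refine ⟨⟨h1M, h2M⟩, ?_⟩
  intro N _ _ _ _ hsN hfN
  obtain ⟨h1N, h2N, h3N⟩ := NilCoxAux2.master n hn N hsN hfN
  have e : M ≃ₗ[ℂ] N := LinearEquiv.ofFinrankEq M N (by rw [h1M, h1N])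
  refine ⟨{ toFun := e
            map_add' := e.map_add
            map_smul' := fun r m => ?_
            invFun := e.symm
            left_inv := e.left_inv
            right_inv := e.right_inv }⟩
  simp only [RingHom.id_apply]
  rw [h3M, h3N, map_smul]
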